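/- Fix Δ > 0. Among all functions of the form α(t) = c₀ cos t + c₁ sin t + c₂ cos(nt) + c₃ sin(nt) with n ∈ ℕ, n ≥ 2, satisfying the constraint ∫₀^{2π} (α'² − α²) dt = 2πΔ², the minimal value of ∫₀^{2π} (α + α'')² dt is 6πΔ², attained exactly when n = 2 and c₂² + c₃² = (2/3)Δ². -/

import Mathlib

/-!
Both `α` and `α'` are sums of a mode of frequency `1` and a mode of frequency `n`, which are
orthogonal on `[0, 2π]`, each mode contributing `π` times the sum of the squares of its two
coefficients. The constraint therefore reads `(n² - 1)(c₂² + c₃²) = 2Δ²`. Since `α + α''`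
annihilates the first mode, `∫ (α + α'')² = π (n² - 1)² (c₂² + c₃²) = 2πΔ² (n² - 1)`, which is
at least `6πΔ²`, with equality exactly for `n = 2`.
-/

open Real intervalIntegral

noncomputable def sinusoid (k a b t : ℝ) : ℝ := a * cos (k * t) + b * sin (k * t)

namespace sinusoid

@[fun_prop]
theorem continuous (k a b : ℝ) : Continuous (sinusoid k a b) := by
  unfold sinusoid; fun_prop

theorem hasDerivAt (k a b t : ℝ) :
    HasDerivAt (sinusoid k a b) (sinusoid k (k * b) (-(k * a)) t) t := by
  have hc := ((hasDerivAt_id t).const_mul k).cos.const_mul a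
  have hs := ((hasDerivAt_id t).const_mul k).sin.const_mul b
  refine (hc.add hs).congr_deriv ?_
  simp only [sinusoid, id]
  ring

theorem periodic (k : ℤ) (a b : ℝ) : Function.Periodic (sinusoid k a b) (2 * π) := by
  intro t
  simp only [sinusoid, mul_add, cos_add_int_mul_two_pi, sin_add_int_mul_two_pi]

theorem zero_left (a b t : ℝ) : sinusoid 0 a b t = a := by simp [sinusoid]

theorem mul_eq (j k a b c d t : ℝ) :
    sinusoid j a b t * sinusoid k c d t =
      sinusoid (j + k) ((a * c - b * d) / 2) ((a * d + b * c) / 2) t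
        + sinusoid (j - k) ((a * c + b * d) / 2) ((b * c - a * d) / 2) t := by
  simp only [sinusoid, add_mul, sub_mul, cos_add, sin_add, cos_sub, sin_sub]
  ring

theorem integral_eq_zero {k : ℤ} (hk : k ≠ 0) (a b : ℝ) :
    ∫ t in (0:ℝ)..2 * π, sinusoid k a b t = 0 := by
  have hk' : (k : ℝ) ≠ 0 := by exact_mod_cast hk
  have hF : ∀ t, HasDerivAt (sinusoid k (-b / k) (a / k)) (sinusoid k a b t) t := fun t => by
    convert hasDerivAt k (-b / k) (a / k) t using 2 <;> field_simp
  rw [integral_eq_sub_of_hasDerivAt (fun t _ => hF t) ((continuous k a b).intervalIntegrable _ _),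
    (periodic k _ _).eq, sub_self]

theorem integral_mul_eq_zero {j k : ℕ} (hjk : j ≠ k) (a b c d : ℝ) :
    ∫ t in (0:ℝ)..2 * π, sinusoid j a b t * sinusoid k c d t = 0 := by
  have hsum : ((j : ℤ) + k) ≠ 0 := by omega
  have hdiff : ((j : ℤ) - k) ≠ 0 := by omega
  have h₁ := integral_eq_zero hsum ((a * c - b * d) / 2) ((a * d + b * c) / 2)
  have h₂ := integral_eq_zero hdiff ((a * c + b * d) / 2) ((b * c - a * d) / 2)
  push_cast at h₁ h₂
  simp only [mul_eq]
  rw [integral_add ((continuous _ _ _).intervalIntegrable _ _)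
    ((continuous _ _ _).intervalIntegrable _ _), h₁, h₂, add_zero]

theorem integral_sq {k : ℕ} (hk : k ≠ 0) (a b : ℝ) :
    ∫ t in (0:ℝ)..2 * π, sinusoid k a b t ^ 2 = π * (a ^ 2 + b ^ 2) := by
  have h₂k : ((k : ℤ) + k) ≠ 0 := by omega
  have hpt : ∀ t, sinusoid k a b t ^ 2 =
      sinusoid ((k + k : ℤ) : ℝ) ((a * a - b * b) / 2) ((a * b + b * a) / 2) t
        + (a ^ 2 + b ^ 2) / 2 := fun t => by
    rw [sq, mul_eq, sub_self, zero_left]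
    push_cast
    ring
  simp only [hpt]
  rw [integral_add ((continuous _ _ _).intervalIntegrable _ _) intervalIntegrable_const,
    integral_eq_zero h₂k, integral_const, smul_eq_mul]
  ring

theorem integral_add_sq {j k : ℕ} (hj : j ≠ 0) (hk : k ≠ 0) (hjk : j ≠ k) (a b c d : ℝ) :
    ∫ t in (0:ℝ)..2 * π, (sinusoid j a b t + sinusoid k c d t) ^ 2 =
      π * (a ^ 2 + b ^ 2 + c ^ 2 + d ^ 2) := by
  have hexp : ∀ t, (sinusoid j a b t + sinusoid k c d t) ^ 2 =
      sinusoid j a b t ^ 2 + 2 * (sinusoid j a b t * sinusoid k c d t) + sinusoid k c d t ^ 2 :=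
    fun t => by ring
  have hint : ∀ f : ℝ → ℝ, Continuous f → IntervalIntegrable f MeasureTheory.volume 0 (2 * π) :=
    fun f hf => hf.intervalIntegrable _ _
  simp only [hexp]
  rw [integral_add (hint _ (by fun_prop)) (hint _ (by fun_prop)),
    integral_add (hint _ (by fun_prop)) (hint _ (by fun_prop)), integral_const_mul,
    integral_sq hj, integral_sq hk, integral_mul_eq_zero hjk]
  ring

theorem deriv_add (j k a b c d : ℝ) :
    deriv (fun t => sinusoid j a b t + sinusoid k c d t) =
      fun t => sinusoid j (j * b) (-(j * a)) t + sinusoid k (k * d) (-(k * c)) t :=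
  funext fun t => ((hasDerivAt j a b t).add (hasDerivAt k c d t)).deriv

end sinusoid

theorem energy_ge_and_eq_iff {n : ℕ} (hn : 2 ≤ n) {c Δ S : ℝ} (hc : 0 < c) (hΔ : 0 < Δ)
    (hS : ((n : ℝ) ^ 2 - 1) * S = 2 * Δ ^ 2) :
    6 * c * Δ ^ 2 ≤ c * ((n : ℝ) ^ 2 - 1) ^ 2 * S ∧
      (c * ((n : ℝ) ^ 2 - 1) ^ 2 * S = 6 * c * Δ ^ 2 ↔ n = 2 ∧ S = 2 / 3 * Δ ^ 2) := by
  have hE : c * ((n : ℝ) ^ 2 - 1) ^ 2 * S = 2 * c * Δ ^ 2 * ((n : ℝ) ^ 2 - 1) := by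
    linear_combination c * ((n : ℝ) ^ 2 - 1) * hS
  have hcΔ : 0 < c * Δ ^ 2 := by positivity
  have hn' : (2 : ℝ) ≤ n := by exact_mod_cast hn
  have hgap : 2 * c * Δ ^ 2 * ((n : ℝ) ^ 2 - 1) - 6 * c * Δ ^ 2 =
      2 * (c * Δ ^ 2) * (((n : ℝ) + 2) * ((n : ℝ) - 2)) := by ring
  have hfactor : 0 ≤ ((n : ℝ) + 2) * ((n : ℝ) - 2) := by nlinarith
  rw [hE]
  refine ⟨by nlinarith, ⟨fun h => ?_, ?_⟩⟩
  · have hn2 : (n : ℝ) = 2 := by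
      have : ((n : ℝ) + 2) * ((n : ℝ) - 2) = 0 := by
        rw [sub_eq_zero.mpr h] at hgap
        simpa [hcΔ.ne'] using hgap.symm
      rcases mul_eq_zero.mp this with h' | h' <;> linarith
    refine ⟨by exact_mod_cast hn2, ?_⟩
    rw [hn2] at hS
    linarith
  · rintro ⟨rfl, -⟩
    push_cast
    ring

theorem stmt_2 (Δ : ℝ) (hΔ : 0 < Δ) (n : ℕ) (hn : 2 ≤ n) (c₀ c₁ c₂ c₃ : ℝ)
    (α : ℝ → ℝ)
    (hα : ∀ t, α t = c₀ * Real.cos t + c₁ * Real.sin t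
      + c₂ * Real.cos (n * t) + c₃ * Real.sin (n * t))
    (hcon : ∫ t in (0:ℝ)..(2 * Real.pi), ((deriv α t) ^ 2 - (α t) ^ 2)
      = 2 * Real.pi * Δ ^ 2) :
    6 * Real.pi * Δ ^ 2 ≤ ∫ t in (0:ℝ)..(2 * Real.pi), (α t + deriv (deriv α) t) ^ 2
    ∧ ((∫ t in (0:ℝ)..(2 * Real.pi), (α t + deriv (deriv α) t) ^ 2
          = 6 * Real.pi * Δ ^ 2)
        ↔ (n = 2 ∧ c₂ ^ 2 + c₃ ^ 2 = (2 / 3) * Δ ^ 2)) := by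
  obtain rfl : α = fun t => sinusoid (1 : ℕ) c₀ c₁ t + sinusoid n c₂ c₃ t :=
    funext fun t => by simp only [hα, sinusoid, Nat.cast_one, one_mul]; ring
  have hn0 : n ≠ 0 := by omega
  have h1n : 1 ≠ n := by omega
  rw [sinusoid.deriv_add, integral_sub ((by fun_prop : Continuous _).intervalIntegrable _ _)
    ((by fun_prop : Continuous _).intervalIntegrable _ _),
    sinusoid.integral_add_sq one_ne_zero hn0 h1n,
    sinusoid.integral_add_sq one_ne_zero hn0 h1n] at hcon
  have hS : ((n : ℝ) ^ 2 - 1) * (c₂ ^ 2 + c₃ ^ 2) = 2 * Δ ^ 2 := by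
    apply mul_left_cancel₀ pi_ne_zero
    linear_combination hcon
  have hcancel : ∀ t, sinusoid (1 : ℕ) c₀ c₁ t + sinusoid n c₂ c₃ t + deriv (deriv
      (fun t => sinusoid (1 : ℕ) c₀ c₁ t + sinusoid n c₂ c₃ t)) t =
      sinusoid (1 : ℕ) 0 0 t + sinusoid n ((1 - n ^ 2) * c₂) ((1 - n ^ 2) * c₃) t := fun t => by
    rw [sinusoid.deriv_add, sinusoid.deriv_add]
    simp only [sinusoid]
    ring
  have hE : ∫ t in (0:ℝ)..2 * π,
      (sinusoid (1 : ℕ) 0 0 t + sinusoid n ((1 - n ^ 2) * c₂) ((1 - n ^ 2) * c₃) t) ^ 2 =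
        π * ((n : ℝ) ^ 2 - 1) ^ 2 * (c₂ ^ 2 + c₃ ^ 2) := by
    rw [sinusoid.integral_add_sq one_ne_zero hn0 h1n]
    ring
  simp only [hcancel, hE]
  exact energy_ge_and_eq_iff hn pi_pos hΔ hS
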